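/- Let H be a bialgebra over ℂ, F a Drinfel'd twist on H, and A an H-module algebra over ℂ whose underlying algebra is commutative, equipped with a ℂ-antilinear involution a ↦ a* satisfying (a·b)* = a*·b*. Let σ : H → H be a ring automorphism such that (ρ(h)(a))* = ρ(σ(h))(a*) for all h ∈ H and a ∈ A, and assume F is Hermitian relative to σ, i.e. (σ ⊗ σ)(F⁻¹) = τ(F⁻¹), equivalently Σ_k σ(f̄^k) ⊗ σ(f̄_k) = Σ_k f̄_k ⊗ f̄^k. Then the involution is an anti-automorphism of the star-product: (a ⋆ b)* = b* ⋆ a* for all a, b ∈ A. -/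

import Mathlib

open scoped TensorProduct

noncomputable section

/-- `Δ ⊗ id` as an algebra homomorphism `H ⊗ H → (H ⊗ H) ⊗ H`. -/
def comulTensorId (R H : Type*) [CommRing R] [Ring H] [Bialgebra R H] :
    (H ⊗[R] H) →ₐ[R] (H ⊗[R] H) ⊗[R] H :=
  Algebra.TensorProduct.map (Bialgebra.comulAlgHom R H) (AlgHom.id R H)

/-- `id ⊗ Δ` as an algebra homomorphism `H ⊗ H → H ⊗ (H ⊗ H)`. -/
def idTensorComul (R H : Type*) [CommRing R] [Ring H] [Bialgebra R H] :
    (H ⊗[R] H) →ₐ[R] H ⊗[R] (H ⊗[R] H) :=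
  Algebra.TensorProduct.map (AlgHom.id R H) (Bialgebra.comulAlgHom R H)

/-- `F` is a Drinfel'd twist on the bialgebra `H` with two-sided inverse `Finv`:
it is invertible and satisfies the 2-cocycle condition
`(F ⊗ 1) · (Δ ⊗ id)(F) = (1 ⊗ F) · (id ⊗ Δ)(F)` in `H ⊗ H ⊗ H`. -/
def IsDrinfeldTwist (R : Type*) {H : Type*} [CommRing R] [Ring H] [Bialgebra R H]
    (F Finv : H ⊗[R] H) : Prop :=
  F * Finv = 1 ∧ Finv * F = 1 ∧
    (TensorProduct.assoc R H H H) ((F ⊗ₜ[R] (1 : H)) * comulTensorId R H F) =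
      ((1 : H) ⊗ₜ[R] F) * idTensorComul R H F

/-- The action of an element of `H ⊗ H` on `M ⊗ N`, acting with the first leg on `M`
and the second leg on `N` through the given representations. -/
def legAct {R H : Type*} [CommRing R] [Ring H] [Algebra R H]
    {M N : Type*} [AddCommGroup M] [Module R M] [AddCommGroup N] [Module R N]
    (ρM : H →ₐ[R] Module.End R M) (ρN : H →ₐ[R] Module.End R N) :
    H ⊗[R] H →ₗ[R] (M ⊗[R] N →ₗ[R] M ⊗[R] N) :=
  (TensorProduct.homTensorHomMap (RingHom.id R) M N M N).comp
    (TensorProduct.map ρM.toLinearMap ρN.toLinearMap)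

/-- `ρ` makes the `R`-algebra `A` into an `H`-module algebra:
`ρ(h)(a·b) = Σ ρ(h₍₁₎)(a) · ρ(h₍₂₎)(b)`. -/
def IsModuleAlgebra (R : Type*) {H A : Type*} [CommRing R] [Ring H] [Bialgebra R H]
    [Ring A] [Algebra R A] (ρ : H →ₐ[R] Module.End R A) : Prop :=
  ∀ (h : H) (a b : A),
    ρ h (a * b) =
      LinearMap.mul' R A (legAct ρ ρ (Coalgebra.comul (R := R) h) (a ⊗ₜ[R] b))

/-- The star-product `a ⋆ b := Σ f̄ᵏ(a) · f̄ₖ(b)`, as a linear map on `A ⊗ A`. -/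
def starProd {R H A : Type*} [CommRing R] [Ring H] [Bialgebra R H] [Ring A] [Algebra R A]
    (ρ : H →ₐ[R] Module.End R A) (Finv : H ⊗[R] H) : A ⊗[R] A →ₗ[R] A :=
  (LinearMap.mul' R A).comp (legAct ρ ρ Finv)

/-! Writing `F⁻¹ = Σ f̄ᵏ ⊗ f̄ₖ`, the involution is additive, multiplicative and turns `h(a)` into
`σ(h)(a*)`, so `(a ⋆ b)*` is the star-product of `a*` and `b*` built from
`(σ ⊗ σ)(F⁻¹) = τ(F⁻¹)` in place of `F⁻¹`. In a commutative algebra, flipping the legs amounts to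
swapping the two arguments of the star-product, which gives `b* ⋆ a*`. -/

section StarProduct

variable {R H A : Type*} [CommRing R] [Ring H] [Bialgebra R H]

theorem legAct_tmul_tmul {M N : Type*} [AddCommGroup M] [Module R M]
    [AddCommGroup N] [Module R N] (ρM : H →ₐ[R] Module.End R M) (ρN : H →ₐ[R] Module.End R N)
    (h k : H) (m : M) (n : N) :
    legAct ρM ρN (h ⊗ₜ[R] k) (m ⊗ₜ[R] n) = ρM h m ⊗ₜ[R] ρN k n := by
  simp [legAct]

section Ring

variable [Ring A] [Algebra R A] (ρ : H →ₐ[R] Module.End R A)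

theorem starProd_add (X Y : H ⊗[R] H) : starProd ρ (X + Y) = starProd ρ X + starProd ρ Y := by
  simp only [starProd, map_add, LinearMap.comp_add]

theorem starProd_sum {ι : Type*} (s : Finset ι) (X : ι → H ⊗[R] H) :
    starProd ρ (∑ i ∈ s, X i) = ∑ i ∈ s, starProd ρ (X i) :=
  LinearMap.ext fun x => by
    simp only [starProd, LinearMap.comp_apply, map_sum, LinearMap.sum_apply]

theorem starProd_tmul_tmul (h k : H) (a b : A) :
    starProd ρ (h ⊗ₜ[R] k) (a ⊗ₜ[R] b) = ρ h a * ρ k b := by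
  simp only [starProd, LinearMap.comp_apply, legAct_tmul_tmul, LinearMap.mul'_apply]

theorem starProd_sum_tmul {ι : Type*} (s : Finset ι) (g₁ g₂ : ι → H) (a b : A) :
    starProd ρ (∑ i ∈ s, g₁ i ⊗ₜ[R] g₂ i) (a ⊗ₜ[R] b) = ∑ i ∈ s, ρ (g₁ i) a * ρ (g₂ i) b := by
  simp only [starProd_sum, LinearMap.sum_apply, starProd_tmul_tmul]

end Ring

theorem starProd_comm_tmul [CommRing A] [Algebra R A] (ρ : H →ₐ[R] Module.End R A)
    (X : H ⊗[R] H) (a b : A) :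
    starProd ρ (TensorProduct.comm R H H X) (b ⊗ₜ[R] a) = starProd ρ X (a ⊗ₜ[R] b) := by
  induction X using TensorProduct.induction_on with
  | zero => simp [starProd]
  | tmul h k => rw [TensorProduct.comm_tmul, starProd_tmul_tmul, starProd_tmul_tmul, mul_comm]
  | add X Y hX hY => simp only [map_add, starProd_add, LinearMap.add_apply, hX, hY]

theorem map_starProd_sum_tmul {H' B : Type*} [Ring H'] [Bialgebra R H'] [Ring A] [Algebra R A]
    [Ring B] [Algebra R B] (ρ : H →ₐ[R] Module.End R A) (ρ' : H' →ₐ[R] Module.End R B)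
    (φ : A →ₙ+* B) (σ : H → H') (hσ : ∀ (h : H) (a : A), φ (ρ h a) = ρ' (σ h) (φ a))
    {ι : Type*} (s : Finset ι) (g₁ g₂ : ι → H) (a b : A) :
    φ (starProd ρ (∑ i ∈ s, g₁ i ⊗ₜ[R] g₂ i) (a ⊗ₜ[R] b)) =
      starProd ρ' (∑ i ∈ s, σ (g₁ i) ⊗ₜ[R] σ (g₂ i)) (φ a ⊗ₜ[R] φ b) := by
  simp only [starProd_sum_tmul, map_sum, map_mul, hσ]

end StarProduct

theorem star_involution_antiautomorphism_general
    (H : Type*) [Ring H] [Bialgebra ℂ H]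
    (A : Type*) [CommRing A] [Algebra ℂ A]
    (ρ : H →ₐ[ℂ] Module.End ℂ A)
    (Finv : H ⊗[ℂ] H)
    (ι : Type*) [Fintype ι] (g₁ g₂ : ι → H)
    (hrep : Finv = ∑ i, g₁ i ⊗ₜ[ℂ] g₂ i)
    (st : A → A)
    (hadd : ∀ a b : A, st (a + b) = st a + st b)
    (hmul : ∀ a b : A, st (a * b) = st a * st b)
    (σ : H ≃+* H)
    (hσ : ∀ (h : H) (a : A), st (ρ h a) = ρ (σ h) (st a))
    (hherm : ∑ i, σ (g₁ i) ⊗ₜ[ℂ] σ (g₂ i) = ∑ i, g₂ i ⊗ₜ[ℂ] g₁ i) :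
    ∀ a b : A,
      st (starProd ρ Finv (a ⊗ₜ[ℂ] b)) =
        starProd ρ Finv ((st b) ⊗ₜ[ℂ] (st a)) := by
  intro a b
  let φ : A →ₙ+* A :=
    { toFun := st
      map_mul' := hmul
      map_zero' := (AddMonoidHom.mk' st hadd).map_zero
      map_add' := hadd }
  have hflip : ∑ i, g₂ i ⊗ₜ[ℂ] g₁ i = TensorProduct.comm ℂ H H Finv := by
    simp only [hrep, map_sum, TensorProduct.comm_tmul]
  calc st (starProd ρ Finv (a ⊗ₜ[ℂ] b))
      = starProd ρ (∑ i, σ (g₁ i) ⊗ₜ[ℂ] σ (g₂ i)) (st a ⊗ₜ[ℂ] st b) := by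
        rw [hrep]; exact map_starProd_sum_tmul ρ ρ φ σ hσ _ g₁ g₂ a b
    _ = starProd ρ (TensorProduct.comm ℂ H H Finv) (st a ⊗ₜ[ℂ] st b) := by rw [hherm, hflip]
    _ = starProd ρ Finv (st b ⊗ₜ[ℂ] st a) := starProd_comm_tmul ρ Finv (st b) (st a)

/-- For a Hermitian Drinfel'd twist `F` on a bialgebra `H` over `ℂ`
and an `H`-module algebra `A` with commutative underlying algebra, equipped with a
`ℂ`-antilinear involution `a ↦ a*` compatible with a ring automorphism `σ` of `H`
(`(ρ(h)(a))* = ρ(σ(h))(a*)`), where Hermiticity means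
`Σ_k σ(f̄ᵏ) ⊗ σ(f̄ₖ) = Σ_k f̄ₖ ⊗ f̄ᵏ`, the involution is an anti-automorphism of
the star-product: `(a ⋆ b)* = b* ⋆ a*`. -/
theorem star_involution_antiautomorphism
    (H : Type*) [Ring H] [Bialgebra ℂ H]
    (A : Type*) [CommRing A] [Algebra ℂ A]
    (ρ : H →ₐ[ℂ] Module.End ℂ A) (hA : IsModuleAlgebra ℂ ρ)
    (F Finv : H ⊗[ℂ] H) (hF : IsDrinfeldTwist ℂ F Finv)
    (ι : Type*) [Fintype ι] (g₁ g₂ : ι → H)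
    (hrep : Finv = ∑ i, g₁ i ⊗ₜ[ℂ] g₂ i)
    (st : A → A)
    (hadd : ∀ a b : A, st (a + b) = st a + st b)
    (hsmul : ∀ (c : ℂ) (a : A), st (c • a) = (starRingEnd ℂ) c • st a)
    (hinvol : ∀ a : A, st (st a) = a)
    (hmul : ∀ a b : A, st (a * b) = st a * st b)
    (σ : H ≃+* H)
    (hσ : ∀ (h : H) (a : A), st (ρ h a) = ρ (σ h) (st a))
    (hherm : ∑ i, σ (g₁ i) ⊗ₜ[ℂ] σ (g₂ i) = ∑ i, g₂ i ⊗ₜ[ℂ] g₁ i) :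
    ∀ a b : A,
      st (starProd ρ Finv (a ⊗ₜ[ℂ] b)) =
        starProd ρ Finv ((st b) ⊗ₜ[ℂ] (st a)) :=
  star_involution_antiautomorphism_general H A ρ Finv ι g₁ g₂ hrep st hadd hmul σ hσ hherm
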